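/- Define recursively ρ₀^1, ρ₁^1 as fixed density matrices on ℂ², and for k ≥ 2: ρ₀^k = (ρ₀^{k−1} ⊗ ρ₀^1 + ρ₁^{k−1} ⊗ ρ₁^1)/2 and ρ₁^k = (ρ₀^{k−1} ⊗ ρ₁^1 + ρ₁^{k−1} ⊗ ρ₀^1)/2. Then the trace distance satisfies D(ρ₀^k, ρ₁^k) = D(ρ₀^1, ρ₁^1)^k for all k ≥ 1. -/

import Mathlib

open Matrix Kronecker ComplexOrder

/-- `|M| = √(Mᴴ M)`, the positive-semidefinite absolute value of a matrix. -/
noncomputable def matAbs {n : Type*} [Fintype n] [DecidableEq n]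
    (M : Matrix n n ℂ) : Matrix n n ℂ :=
  (Matrix.posSemidef_conjTranspose_mul_self M).1.eigenvectorUnitary.1 *
    diagonal (((↑) : ℝ → ℂ) ∘ Real.sqrt ∘ (Matrix.posSemidef_conjTranspose_mul_self M).1.eigenvalues) *
    (star (Matrix.posSemidef_conjTranspose_mul_self M).1.eigenvectorUnitary : Matrix n n ℂ)

/-- Trace distance `D(A,B) = (1/2) Tr |A - B|`. -/
noncomputable def traceDist {n : Type*} [Fintype n] [DecidableEq n]
    (A B : Matrix n n ℂ) : ℝ :=
  (1 / 2) * (Matrix.trace (matAbs (A - B))).re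

/-!
The differences `Δₖ = ρ₀ᵏ - ρ₁ᵏ` satisfy `Δₖ₊₁ = ½ (Δₖ ⊗ Δ₁)` up to a relabelling of the basis.
The absolute value commutes with relabelling, with nonnegative scalars and with Kronecker
products, since in each case the candidate is positive semidefinite and squares to `Mᴴ M`.
Hence `Tr |Δₖ₊₁| = ½ Tr |Δₖ| · Tr |Δ₁|`, i.e. `D(ρ₀ᵏ⁺¹, ρ₁ᵏ⁺¹) = D(ρ₀ᵏ, ρ₁ᵏ) · D(ρ₀¹, ρ₁¹)`.
-/

lemma kronecker_add_kronecker_sub {l m n p α : Type*} [CommRing α]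
    (A₀ A₁ : Matrix l m α) (B₀ B₁ : Matrix n p α) :
    A₀ ⊗ₖ B₀ + A₁ ⊗ₖ B₁ - (A₀ ⊗ₖ B₁ + A₁ ⊗ₖ B₀) = (A₀ - A₁) ⊗ₖ (B₀ - B₁) := by
  ext ⟨i, j⟩ ⟨k, l⟩
  simp only [Matrix.sub_apply, Matrix.add_apply, kroneckerMap_apply]
  ring

lemma trace_reindex {m n R : Type*} [Fintype m] [Fintype n] [AddCommMonoid R]
    (e : m ≃ n) (M : Matrix m m R) : (reindex e e M).trace = M.trace :=
  Fintype.sum_equiv e.symm _ _ fun _ => rfl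

section

variable {n m : Type*} [Fintype n] [DecidableEq n] [Fintype m] [DecidableEq m]

open scoped MatrixOrder

lemma matAbs_eq_cfc (M : Matrix n n ℂ) : matAbs M = cfc Real.sqrt (Mᴴ * M) := by
  rw [(posSemidef_conjTranspose_mul_self M).1.cfc_eq, IsHermitian.cfc,
    Unitary.conjStarAlgAut_apply]
  rfl

lemma matAbs_posSemidef (M : Matrix n n ℂ) : (matAbs M).PosSemidef := by
  rw [matAbs_eq_cfc]
  exact nonneg_iff_posSemidef.mp (cfc_nonneg fun x _ => Real.sqrt_nonneg x)

lemma matAbs_sq (M : Matrix n n ℂ) : matAbs M ^ 2 = Mᴴ * M := by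
  have hM : 0 ≤ Mᴴ * M := (posSemidef_conjTranspose_mul_self M).nonneg
  have hM_sa : IsSelfAdjoint (Mᴴ * M) := (posSemidef_conjTranspose_mul_self M).1
  rw [matAbs_eq_cfc, ← cfc_pow Real.sqrt 2 (Mᴴ * M) (ha := hM_sa)]
  conv_rhs => rw [← cfc_id' ℝ (Mᴴ * M) hM_sa]
  exact cfc_congr fun x hx => by
    simp [Real.sq_sqrt (spectrum_nonneg_of_nonneg hM hx)]

lemma matAbs_eq_of_sq {M B : Matrix n n ℂ} (hB : B.PosSemidef) (h : B ^ 2 = Mᴴ * M) :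
    matAbs M = B := by
  have hB_sa : IsSelfAdjoint B := hB.1
  rw [matAbs_eq_cfc, ← h, ← cfc_pow_id (R := ℝ) B 2 hB_sa,
    ← cfc_comp Real.sqrt (fun x : ℝ => x ^ 2) B hB_sa]
  conv_rhs => rw [← cfc_id' ℝ B hB_sa]
  exact cfc_congr fun x hx => by
    simp [Real.sqrt_sq (spectrum_nonneg_of_nonneg hB.nonneg hx)]

lemma matAbs_kronecker (A : Matrix n n ℂ) (B : Matrix m m ℂ) :
    matAbs (A ⊗ₖ B) = matAbs A ⊗ₖ matAbs B := by
  refine matAbs_eq_of_sq ((matAbs_posSemidef A).kronecker (matAbs_posSemidef B)) ?_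
  rw [sq, ← mul_kronecker_mul, ← sq, ← sq, matAbs_sq, matAbs_sq, conjTranspose_kronecker,
    ← mul_kronecker_mul]

lemma matAbs_smul {c : ℂ} (hc : 0 ≤ c) (M : Matrix n n ℂ) :
    matAbs (c • M) = c • matAbs M := by
  refine matAbs_eq_of_sq ((matAbs_posSemidef M).smul hc) ?_
  have hc_real : star c = c := Complex.conj_eq_iff_im.mpr (Complex.nonneg_iff.mp hc).2.symm
  rw [smul_pow, matAbs_sq, conjTranspose_smul, Matrix.smul_mul, Matrix.mul_smul, smul_smul,
    hc_real, sq]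

lemma matAbs_reindex (e : m ≃ n) (M : Matrix m m ℂ) :
    matAbs (reindex e e M) = reindex e e (matAbs M) := by
  refine matAbs_eq_of_sq ((matAbs_posSemidef M).submatrix e.symm) ?_
  rw [reindex_apply, reindex_apply, sq, submatrix_mul_equiv, conjTranspose_submatrix,
    submatrix_mul_equiv, ← sq, matAbs_sq]

lemma im_trace_matAbs (M : Matrix n n ℂ) : (matAbs M).trace.im = 0 :=
  (Complex.nonneg_iff.mp (matAbs_posSemidef M).trace_nonneg).2.symm

lemma re_trace_matAbs_kronecker (A : Matrix n n ℂ) (B : Matrix m m ℂ) :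
    (matAbs (A ⊗ₖ B)).trace.re = (matAbs A).trace.re * (matAbs B).trace.re := by
  rw [matAbs_kronecker, trace_kronecker, Complex.mul_re, im_trace_matAbs, im_trace_matAbs,
    mul_zero, sub_zero]

lemma traceDist_reindex (e : m ≃ n) (A B : Matrix m m ℂ) :
    traceDist (reindex e e A) (reindex e e B) = traceDist A B := by
  have hsub : reindex e e A - reindex e e B = reindex e e (A - B) := rfl
  rw [traceDist, traceDist, hsub, matAbs_reindex, trace_reindex]

lemma traceDist_half_smul_kronecker (A₀ A₁ : Matrix n n ℂ) (B₀ B₁ : Matrix m m ℂ) :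
    traceDist ((1 / 2 : ℂ) • (A₀ ⊗ₖ B₀ + A₁ ⊗ₖ B₁)) ((1 / 2 : ℂ) • (A₀ ⊗ₖ B₁ + A₁ ⊗ₖ B₀)) =
      traceDist A₀ A₁ * traceDist B₀ B₁ := by
  have half_nonneg : (0 : ℂ) ≤ 1 / 2 := by rw [Complex.nonneg_iff]; norm_num
  have re_half_mul (z : ℂ) : (1 / 2 * z).re = 1 / 2 * z.re := by simp
  rw [traceDist, traceDist, traceDist, ← smul_sub, kronecker_add_kronecker_sub,
    matAbs_smul half_nonneg, trace_smul, smul_eq_mul, re_half_mul, re_trace_matAbs_kronecker]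
  ring

end

theorem traceDist_pow_of_recursive
    (ρ : Bool → (k : ℕ) → Matrix (Fin (2 ^ k)) (Fin (2 ^ k)) ℂ)
    (hrec0 : ∀ k : ℕ, 1 ≤ k → ρ false (k + 1) =
      Matrix.reindex (finProdFinEquiv.trans (finCongr (by ring : 2 ^ k * 2 ^ 1 = 2 ^ (k + 1))))
        (finProdFinEquiv.trans (finCongr (by ring : 2 ^ k * 2 ^ 1 = 2 ^ (k + 1))))
        ((1 / 2 : ℂ) • (ρ false k ⊗ₖ ρ false 1 + ρ true k ⊗ₖ ρ true 1)))
    (hrec1 : ∀ k : ℕ, 1 ≤ k → ρ true (k + 1) =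
      Matrix.reindex (finProdFinEquiv.trans (finCongr (by ring : 2 ^ k * 2 ^ 1 = 2 ^ (k + 1))))
        (finProdFinEquiv.trans (finCongr (by ring : 2 ^ k * 2 ^ 1 = 2 ^ (k + 1))))
        ((1 / 2 : ℂ) • (ρ false k ⊗ₖ ρ true 1 + ρ true k ⊗ₖ ρ false 1))) :
    ∀ k : ℕ, 1 ≤ k →
      traceDist (ρ false k) (ρ true k) = (traceDist (ρ false 1) (ρ true 1)) ^ k := by
  intro k hk
  induction k, hk using Nat.le_induction with
  | base => exact (pow_one _).symm
  | succ k hk ih =>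
    rw [hrec0 k hk, hrec1 k hk, traceDist_reindex, traceDist_half_smul_kronecker, ih]
    exact (pow_succ _ _).symm
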